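/- For the experimental model with Q(ω) = ω²m₀I − K + iωΓ, K = [[κ₀ + χ, −χ], [−χ − δχ, κ₀ − κ + χ]], Γ = diag(γ₀ + γ/2, γ₀ − γ/2), define the shifted frequency ω̃ = ω + iγ₀/(2m₀). Then Q(ω) = ω̃²m₀I − K̃ + iω̃Γ̃, where Γ̃ = (γ/2)σ_z and K̃ = K − (γ₀/2m₀)Γ̃ − (γ₀²/4m₀)I. Moreover, when κ = γ₀γ/(2m₀), the shifted polynomial satisfies σ_x Q̃(ω̃)† σ_x = Q̃(ω̃*), so the shifted eigenvalue set {ω̃} is invariant under complex conjugation; equivalently, the original eigenvalues ω are symmetric about the horizontal line Im ω = −γ₀/(2m₀). -/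
import Mathlib


open Matrix Complex

noncomputable def σxM : Matrix (Fin 2) (Fin 2) ℂ := !![0, 1; 1, 0]
noncomputable def σzM : Matrix (Fin 2) (Fin 2) ℂ := !![1, 0; 0, -1]

/-- Stiffness matrix of the experimental model. -/
noncomputable def Kexp (κ₀ κ χ δχ : ℝ) : Matrix (Fin 2) (Fin 2) ℂ :=
  !![((κ₀ : ℂ) + (χ : ℂ)), -(χ : ℂ);
     (-(χ : ℂ) - (δχ : ℂ)), ((κ₀ : ℂ) - (κ : ℂ) + (χ : ℂ))]

/-- Damping matrix Γ = diag(γ₀ + γ/2, γ₀ − γ/2). -/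
noncomputable def Γexp (γ₀ γ : ℝ) : Matrix (Fin 2) (Fin 2) ℂ :=
  !![((γ₀ : ℂ) + (γ : ℂ) / 2), 0; 0, ((γ₀ : ℂ) - (γ : ℂ) / 2)]

/-- Quadratic pencil of the experimental model. -/
noncomputable def Qexp (m₀ κ₀ κ χ δχ γ₀ γ : ℝ) (ω : ℂ) : Matrix (Fin 2) (Fin 2) ℂ :=
  ω ^ 2 • ((m₀ : ℂ) • (1 : Matrix (Fin 2) (Fin 2) ℂ)) - Kexp κ₀ κ χ δχ
    + (Complex.I * ω) • Γexp γ₀ γ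

/-- Effective gain–loss balanced damping matrix Γ̃ = (γ/2)σ_z. -/
noncomputable def Γt (γ : ℝ) : Matrix (Fin 2) (Fin 2) ℂ := ((γ : ℂ) / 2) • σzM

/-- Effective stiffness matrix K̃ = K − (γ₀/2m₀)Γ̃ − (γ₀²/4m₀)I. -/
noncomputable def Kt (m₀ κ₀ κ χ δχ γ₀ γ : ℝ) : Matrix (Fin 2) (Fin 2) ℂ :=
  Kexp κ₀ κ χ δχ - ((γ₀ : ℂ) / (2 * (m₀ : ℂ))) • Γt γ
    - ((γ₀ : ℂ) ^ 2 / (4 * (m₀ : ℂ))) • (1 : Matrix (Fin 2) (Fin 2) ℂ)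

/-- Shifted quadratic pencil Q̃(ω̃) = ω̃²m₀I − K̃ + iω̃Γ̃. -/
noncomputable def Qt (m₀ κ₀ κ χ δχ γ₀ γ : ℝ) (ωt : ℂ) : Matrix (Fin 2) (Fin 2) ℂ :=
  ωt ^ 2 • ((m₀ : ℂ) • (1 : Matrix (Fin 2) (Fin 2) ℂ)) - Kt m₀ κ₀ κ χ δχ γ₀ γ
    + (Complex.I * ωt) • Γt γ

/-- Subspace symmetry of the experimental model: the frequency shift
ω̃ = ω + iγ₀/(2m₀) turns Q into the pencil Q̃ with balanced gain–loss; on the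
plane κ = γ₀γ/(2m₀) the shifted pencil satisfies σ_x Q̃(ω̃)† σ_x = Q̃(ω̃*), so the
shifted eigenvalues are conjugation-symmetric, i.e. the original eigenvalues
are symmetric about the line Im ω = −γ₀/(2m₀). -/
theorem experimental_subspace_symmetry (m₀ κ₀ κ χ δχ γ₀ γ : ℝ) (hm₀ : 0 < m₀) :
    (∀ ω : ℂ, Qexp m₀ κ₀ κ χ δχ γ₀ γ ω
        = Qt m₀ κ₀ κ χ δχ γ₀ γ (ω + Complex.I * ((γ₀ : ℂ) / (2 * (m₀ : ℂ)))))
    ∧ (κ = γ₀ * γ / (2 * m₀) →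
        (∀ ωt : ℂ, σxM * (Qt m₀ κ₀ κ χ δχ γ₀ γ ωt)ᴴ * σxM
            = Qt m₀ κ₀ κ χ δχ γ₀ γ (starRingEnd ℂ ωt))
        ∧ (∀ ωt : ℂ, (Qt m₀ κ₀ κ χ δχ γ₀ γ ωt).det = 0 ↔
            (Qt m₀ κ₀ κ χ δχ γ₀ γ (starRingEnd ℂ ωt)).det = 0)
        ∧ (∀ ω : ℂ, (Qexp m₀ κ₀ κ χ δχ γ₀ γ ω).det = 0 ↔
            (Qexp m₀ κ₀ κ χ δχ γ₀ γ
              (starRingEnd ℂ ω - Complex.I * ((γ₀ : ℂ) / (m₀ : ℂ)))).det = 0)) := by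
  have hm : (m₀ : ℂ) ≠ 0 := by exact_mod_cast hm₀.ne'
  obtain ⟨c, hc⟩ : ∃ c : ℝ, (γ₀ : ℂ) = 2 * (m₀ : ℂ) * (c : ℂ) :=
    ⟨γ₀ / (2 * m₀), by push_cast; field_simp⟩
  have h1 : (γ₀ : ℂ) / (2 * (m₀ : ℂ)) = (c : ℂ) := by rw [hc]; field_simp
  have h2 : (γ₀ : ℂ) ^ 2 / (4 * (m₀ : ℂ)) = (m₀ : ℂ) * (c : ℂ) ^ 2 := by
    rw [hc]; field_simp; ring
  have part1 : ∀ ω : ℂ, Qexp m₀ κ₀ κ χ δχ γ₀ γ ω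
      = Qt m₀ κ₀ κ χ δχ γ₀ γ (ω + Complex.I * ((γ₀ : ℂ) / (2 * (m₀ : ℂ)))) := by
    intro ω
    simp only [Qexp, Qt, Kt, Kexp, Γt, Γexp, σzM]
    simp only [h1, h2]
    simp only [hc]
    ext i j
    fin_cases i <;> fin_cases j <;>
      simp [Matrix.one_apply] <;> ring_nf <;> simp [Complex.I_sq] <;> ring
  refine ⟨part1, fun hκ => ?_⟩
  have h3 : (κ : ℂ) = (c : ℂ) * (γ : ℂ) := by
    rw [hκ]; push_cast; rw [hc]; field_simp
  have psym : ∀ ωt : ℂ, σxM * (Qt m₀ κ₀ κ χ δχ γ₀ γ ωt)ᴴ * σxM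
      = Qt m₀ κ₀ κ χ δχ γ₀ γ (starRingEnd ℂ ωt) := by
    intro ωt
    simp only [Qt, Kt, Kexp, Γt, Γexp, σzM, σxM]
    simp only [h1, h2, h3]
    ext i j
    fin_cases i <;> fin_cases j <;>
      simp [Matrix.mul_apply, Fin.sum_univ_two, Matrix.conjTranspose_apply,
        Matrix.vecMul, dotProduct, Matrix.sub_apply, Matrix.add_apply,
        Matrix.smul_apply, Matrix.one_apply, map_add, map_sub, _root_.map_mul,
        map_div₀, map_pow, map_ofNat, Complex.conj_ofReal, Complex.conj_I] <;>
      ring_nf <;> simp [Complex.I_sq] <;> ring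
  have pdet : ∀ ωt : ℂ, (Qt m₀ κ₀ κ χ δχ γ₀ γ ωt).det = 0 ↔
      (Qt m₀ κ₀ κ χ δχ γ₀ γ (starRingEnd ℂ ωt)).det = 0 := by
    intro ωt
    have h : star (Qt m₀ κ₀ κ χ δχ γ₀ γ ωt).det
        = (Qt m₀ κ₀ κ χ δχ γ₀ γ (starRingEnd ℂ ωt)).det := by
      have h := congrArg Matrix.det (psym ωt)
      rw [Matrix.det_mul, Matrix.det_mul, Matrix.det_conjTranspose] at h
      have hσ : (σxM).det = -1 := by simp [σxM]
      rw [hσ] at h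
      simpa using h
    constructor
    · intro h0
      rw [← h, h0, star_zero]
    · intro h0
      have h2 := h.trans h0
      simpa using congrArg star h2
  refine ⟨psym, pdet, fun ω => ?_⟩
  have key : (starRingEnd ℂ ω - Complex.I * ((γ₀ : ℂ) / (m₀ : ℂ)))
      + Complex.I * ((γ₀ : ℂ) / (2 * (m₀ : ℂ)))
      = starRingEnd ℂ (ω + Complex.I * ((γ₀ : ℂ) / (2 * (m₀ : ℂ)))) := by
    simp only [map_add, _root_.map_mul, Complex.conj_I, map_div₀, map_ofNat, Complex.conj_ofReal]
    field_simp
    ring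
  rw [part1 ω, part1 (starRingEnd ℂ ω - Complex.I * ((γ₀ : ℂ) / (m₀ : ℂ))), key]
  exact pdet _
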